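/- Let T_m ~ Binomial(m+n-1, m/(m+n)). Then P(T_m ≥ m) is strictly decreasing in m for fixed positive integer n. -/

import Mathlib

/-!
Write `p = m/(m+n)`, `q = (m+1)/(m+n+1)`, `N = m+n-1` and `b_{N,m}(x) = C(N,m) x^m (1-x)^(N-m)`
for the Bernstein polynomial. Pascal's rule gives
`P(Bin(N+1, p) ≥ m+1) = P(Bin(N, p) ≥ m) - (1-p) b_{N,m}(p)`, and moving the success probability of
`Bin(N+1, ·)` from `p` to `q` raises the tail by `(N+1) (q-p) b_{N,m}(ξ)` for some `ξ ∈ (p, q)`, since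
the derivative of the tail is `(N+1) b_{N,m}`. As `(N+1)(q-p) = 1-q < 1-ξ` and `t^m (1-t)^n`
decreases beyond its mode `p`, this gain is smaller than the loss `(1-p) b_{N,m}(p)`.
-/

open Finset Polynomial

section Bernstein

variable {R : Type*} [CommRing R]

theorem bernsteinPolynomial_succ_succ (n ν : ℕ) :
    bernsteinPolynomial R (n + 1) (ν + 1) =
      X * bernsteinPolynomial R n ν + (1 - X) * bernsteinPolynomial R n (ν + 1) := by
  rcases lt_trichotomy ν n with hlt | rfl | hgt
  · obtain ⟨d, rfl⟩ := Nat.exists_eq_add_of_lt hlt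
    simp only [bernsteinPolynomial, Nat.choose_succ_succ, Nat.cast_add,
      show ν + d + 1 + 1 - (ν + 1) = d + 1 by omega, show ν + d + 1 - ν = d + 1 by omega,
      show ν + d + 1 - (ν + 1) = d by omega]
    ring
  · simp [bernsteinPolynomial, pow_succ, mul_comm]
  · simp [bernsteinPolynomial.eq_zero_of_lt, hgt, hgt.trans (Nat.lt_succ_self ν)]

theorem sum_range_succ_bernsteinPolynomial_succ (n k : ℕ) :
    ∑ ν ∈ range (k + 1), bernsteinPolynomial R (n + 1) ν =
      ∑ ν ∈ range k, bernsteinPolynomial R n ν + (1 - X) * bernsteinPolynomial R n k := by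
  have hzero : bernsteinPolynomial R (n + 1) 0 = (1 - X) * bernsteinPolynomial R n 0 := by
    simp [bernsteinPolynomial, pow_succ, mul_comm]
  have hshift := sum_range_succ' (bernsteinPolynomial R n) k
  rw [sum_range_succ] at hshift
  rw [sum_range_succ', hzero]
  simp only [bernsteinPolynomial_succ_succ, sum_add_distrib, ← mul_sum]
  linear_combination (X - 1) * hshift

theorem derivative_sum_range_succ_bernsteinPolynomial_succ (n k : ℕ) :
    derivative (∑ ν ∈ range (k + 1), bernsteinPolynomial R (n + 1) ν) =
      -((n + 1) * bernsteinPolynomial R n k) := by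
  rw [derivative_sum, sum_range_succ']
  simp only [bernsteinPolynomial.derivative_succ_aux, bernsteinPolynomial.derivative_zero,
    ← mul_sum, sum_range_sub']
  push_cast
  ring

theorem sum_Icc_bernsteinPolynomial {n k : ℕ} (hk : k ≤ n + 1) :
    ∑ ν ∈ Icc k n, bernsteinPolynomial R n ν = 1 - ∑ ν ∈ range k, bernsteinPolynomial R n ν := by
  rw [← bernsteinPolynomial.sum R n, ← sum_range_add_sum_Ico _ hk, Finset.Ico_add_one_right_eq_Icc]
  ring

end Bernstein

theorem strictAntiOn_pow_mul_one_sub_pow (a : ℕ) {b : ℕ} (hb : b ≠ 0) :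
    StrictAntiOn (fun t : ℝ => t ^ a * (1 - t) ^ b) (Set.Icc (a / (a + b)) 1) := by
  have hab : (0 : ℝ) < a + b := by positivity
  refine strictAntiOn_of_deriv_neg (convex_Icc _ _) (by fun_prop) fun t ht => ?_
  rw [interior_Icc] at ht
  obtain ⟨hmode, ht1⟩ := ht
  have ht0 : 0 < t := lt_of_le_of_lt (by positivity) hmode
  have hsign : a * (1 - t) - b * t < 0 := by
    rw [div_lt_iff₀ hab] at hmode
    linarith
  have hderiv : deriv (fun t : ℝ => t ^ a * (1 - t) ^ b) t =
      a * t ^ (a - 1) * (1 - t) ^ b - b * t ^ a * (1 - t) ^ (b - 1) := by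
    have h1 : HasDerivAt (fun t : ℝ => (1 - t) ^ b) (b * (1 - t) ^ (b - 1) * -1) t :=
      (hasDerivAt_pow b (1 - t)).comp t ((hasDerivAt_id t).const_sub 1)
    rw [((hasDerivAt_pow a t).fun_mul h1).deriv]
    ring
  -- Scaling by `t (1 - t)` clears the truncated exponents `a - 1` and `b - 1`.
  have hpow (c : ℕ) (s : ℝ) : c * s ^ (c - 1) * s = c * s ^ c := by
    cases c <;> simp [pow_succ, mul_assoc]
  have hscaled : t * (1 - t) * deriv (fun t : ℝ => t ^ a * (1 - t) ^ b) t =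
      t ^ a * (1 - t) ^ b * (a * (1 - t) - b * t) := by
    rw [hderiv]
    linear_combination (1 - t) ^ b * (1 - t) * hpow a t - t ^ a * t * hpow b (1 - t)
  have ht1' : 0 < 1 - t := sub_pos.mpr ht1
  refine neg_of_mul_neg_right (a := t * (1 - t)) ?_ (by positivity)
  rw [hscaled]
  exact mul_neg_of_pos_of_neg (by positivity) hsign

theorem mul_pow_mul_one_sub_pow_lt (m l : ℕ) {ξ : ℝ}
    (hξ : ξ ∈ Set.Ioo ((m : ℝ) / (m + l + 1)) ((m + 1) / (m + l + 2))) :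
    (m + l + 1) * ((m + 1) / (m + l + 2) - m / (m + l + 1)) * (ξ ^ m * (1 - ξ) ^ l) <
      (1 - m / (m + l + 1)) * ((m / (m + l + 1)) ^ m * (1 - m / (m + l + 1)) ^ l) := by
  set p : ℝ := m / (m + l + 1)
  set q : ℝ := (m + 1) / (m + l + 2)
  obtain ⟨hpξ, hξq⟩ := hξ
  have hslope : (m + l + 1) * (q - p) = 1 - q := by
    simp only [p, q]
    field_simp
    ring
  have hq1 : q < 1 := by
    rw [div_lt_one (by positivity)]
    linarith
  have hp0 : 0 ≤ p := by positivity
  have hmode : p = m / (m + (l + 1 : ℕ)) := by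
    simp only [p]
    push_cast
    ring
  have hdecay : ξ ^ m * (1 - ξ) ^ (l + 1) < p ^ m * (1 - p) ^ (l + 1) :=
    strictAntiOn_pow_mul_one_sub_pow m l.succ_ne_zero
      ⟨hmode.ge, (hpξ.trans hξq).le.trans hq1.le⟩ ⟨(hmode ▸ hpξ).le, (hξq.trans hq1).le⟩ hpξ
  have hξ0 : 0 < ξ := hp0.trans_lt hpξ
  have hξ1 : 0 < 1 - ξ := by linarith
  calc (m + l + 1) * (q - p) * (ξ ^ m * (1 - ξ) ^ l)
      = (1 - q) * (ξ ^ m * (1 - ξ) ^ l) := by rw [hslope]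
    _ < (1 - ξ) * (ξ ^ m * (1 - ξ) ^ l) := by gcongr
    _ = ξ ^ m * (1 - ξ) ^ (l + 1) := by ring
    _ < p ^ m * (1 - p) ^ (l + 1) := hdecay
    _ = (1 - p) * (p ^ m * (1 - p) ^ l) := by ring

noncomputable def binomialTail (N k : ℕ) (x : ℝ) : ℝ :=
  ∑ j ∈ Icc k N, (N.choose j : ℝ) * x ^ j * (1 - x) ^ (N - j)

theorem binomialTail_eq_one_sub_eval {N k : ℕ} (hk : k ≤ N + 1) (x : ℝ) :
    binomialTail N k x = 1 - (∑ j ∈ range k, bernsteinPolynomial ℝ N j).eval x := by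
  rw [← eval_one (x := x), ← eval_sub, ← sum_Icc_bernsteinPolynomial hk, eval_finsetSum]
  simp [binomialTail, bernsteinPolynomial]

theorem binomialTail_succ_lt (m l : ℕ) :
    binomialTail (m + l + 1) (m + 1) ((m + 1) / (m + l + 2)) <
      binomialTail (m + l) m (m / (m + l + 1)) := by
  set p : ℝ := m / (m + l + 1)
  set q : ℝ := (m + 1) / (m + l + 2)
  set G := ∑ j ∈ range (m + 1), bernsteinPolynomial ℝ (m + l + 1) j
  set H := ∑ j ∈ range m, bernsteinPolynomial ℝ (m + l) j
  have hpq : p < q := by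
    rw [div_lt_div_iff₀ (by positivity) (by positivity)]
    linarith
  have hbernstein (x : ℝ) :
      (bernsteinPolynomial ℝ (m + l) m).eval x = (m + l).choose m * (x ^ m * (1 - x) ^ l) := by
    simp [bernsteinPolynomial, mul_assoc]
  have hC : (0 : ℝ) < (m + l).choose m := mod_cast Nat.choose_pos (Nat.le_add_right m l)
  have hrec : G.eval p = H.eval p + (1 - p) * (bernsteinPolynomial ℝ (m + l) m).eval p := by
    simp [G, H, sum_range_succ_bernsteinPolynomial_succ]
  obtain ⟨ξ, hξ, hmvt⟩ := exists_hasDerivAt_eq_slope (fun x => G.eval x)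
    (fun x => G.derivative.eval x) hpq G.continuous.continuousOn fun x _ => G.hasDerivAt x
  have hincrement : G.eval q - G.eval p =
      -((m + l + 1) * (q - p) * (bernsteinPolynomial ℝ (m + l) m).eval ξ) := by
    rw [eq_div_iff (sub_pos.mpr hpq).ne', derivative_sum_range_succ_bernsteinPolynomial_succ]
      at hmvt
    simp only [eval_neg, eval_mul, eval_add, eval_natCast, eval_one] at hmvt
    push_cast at hmvt
    linear_combination -hmvt
  have hbound := mul_lt_mul_of_pos_left (mul_pow_mul_one_sub_pow_lt m l hξ) hC
  rw [binomialTail_eq_one_sub_eval (by omega), binomialTail_eq_one_sub_eval (by omega)]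
  rw [hbernstein] at hrec hincrement
  linarith

theorem binomialTail_mean_succ_lt {n : ℕ} (hn : 0 < n) (m : ℕ) :
    binomialTail (m + 1 + n - 1) (m + 1) ((m + 1 : ℕ) / ((m + 1 : ℕ) + n)) <
      binomialTail (m + n - 1) m (m / (m + n)) := by
  obtain ⟨l, rfl⟩ := Nat.exists_eq_succ_of_ne_zero hn.ne'
  rw [show m + 1 + (l + 1) - 1 = m + l + 1 by omega, show m + (l + 1) - 1 = m + l by omega]
  convert binomialTail_succ_lt m l using 2 <;> push_cast <;> ring

theorem binomial_tail_strict_anti_general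
    (n : ℕ) (hn : 0 < n) (m₁ m₂ : ℕ) (h : m₁ < m₂) :
    (∑ j ∈ Finset.Icc m₂ (m₂ + n - 1),
        ((m₂ + n - 1).choose j : ℝ) * ((m₂ : ℝ) / (m₂ + n)) ^ j *
          (1 - (m₂ : ℝ) / (m₂ + n)) ^ (m₂ + n - 1 - j))
      < ∑ j ∈ Finset.Icc m₁ (m₁ + n - 1),
        ((m₁ + n - 1).choose j : ℝ) * ((m₁ : ℝ) / (m₁ + n)) ^ j *
          (1 - (m₁ : ℝ) / (m₁ + n)) ^ (m₁ + n - 1 - j) :=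
  strictAnti_nat_of_succ_lt (f := fun m => binomialTail (m + n - 1) m (m / (m + n)))
    (binomialTail_mean_succ_lt hn) h

/-- P(T_m ≥ m) for T_m ~ Binomial(m+n-1, m/(m+n)) is strictly decreasing in m,
for fixed positive n. -/
theorem binomial_tail_strict_anti
    (n : ℕ) (hn : 0 < n) (m₁ m₂ : ℕ) (hm₁ : 0 < m₁) (h : m₁ < m₂) :
    (∑ j ∈ Finset.Icc m₂ (m₂ + n - 1),
        ((m₂ + n - 1).choose j : ℝ) * ((m₂ : ℝ) / (m₂ + n)) ^ j *
          (1 - (m₂ : ℝ) / (m₂ + n)) ^ (m₂ + n - 1 - j))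
      < ∑ j ∈ Finset.Icc m₁ (m₁ + n - 1),
        ((m₁ + n - 1).choose j : ℝ) * ((m₁ : ℝ) / (m₁ + n)) ^ j *
          (1 - (m₁ : ℝ) / (m₁ + n)) ^ (m₁ + n - 1 - j) :=
  binomial_tail_strict_anti_general n hn m₁ m₂ h
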